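/- arXiv:2404.01795 — 4 statements merged into one kernel-verified Lean document; each statement's English description precedes it below -/
import Mathlib

section
/- Let μ^N ∈ P_1((ℝ^d)^N) be exchangeable and μ ∈ P_1(ℝ^d). For 1 ≤ k ≤ N let π_k be the projection onto the first k coordinates. Then the L^1 Wasserstein distance with respect to the additive metric ρ_1(x,y) = ∑_i |x^i − y^i| satisfies W̃_1(μ^N ∘ π_k^{−1}, μ^{⊗k}) ≤ (k/N) W̃_1(μ^N, μ^{⊗N}). -/
open MeasureTheory

/-- The Kantorovich `L¹`-transport cost between two measures on `X` for a cost
function `ρ`, defined as the infimum over couplings. -/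
noncomputable def W1 {X : Type*} [MeasurableSpace X] (ρ : X → X → ℝ)
    (μ ν : Measure X) : ℝ :=
  sInf {r : ℝ | ∃ π : Measure (X × X), IsProbabilityMeasure π ∧
    π.map Prod.fst = μ ∧ π.map Prod.snd = ν ∧ r = ∫ p, ρ p.1 p.2 ∂π}

/-- The additive `ℓ¹` metric `ρ₁(x,y) = ∑ᵢ |xⁱ − yⁱ|` on `(ℝ^d)^m`. -/
noncomputable def rho1 {d m : ℕ} (x y : Fin m → EuclideanSpace ℝ (Fin d)) : ℝ :=
  ∑ i, ‖x i - y i‖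

/-!
Fix a coupling `π` of `μ^N` and `μ^{⊗N}` and let `c m` be its expected cost in coordinate `m`.
For each cyclic shift `j` of `Fin N`, pushing `π` forward along the window `i ↦ i + j` of `k`
coordinates gives a coupling of `μ^N ∘ π_k⁻¹` (by exchangeability) and `μ^{⊗k}` of cost
`∑ i, c (i + j)`. Summed over the `N` shifts every coordinate is counted `k` times, so
`N W̃₁(μ^N ∘ π_k⁻¹, μ^{⊗k}) ≤ k ∫ ρ₁ dπ`; then take the infimum over `π`.
-/

section Coupling

variable {X : Type*} [MeasurableSpace X] {ρ : X → X → ℝ} {μ ν : Measure X}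

lemma W1_le_integral (hρ : ∀ x y, 0 ≤ ρ x y) (π : Measure (X × X)) [IsProbabilityMeasure π]
    (h₁ : π.map Prod.fst = μ) (h₂ : π.map Prod.snd = ν) :
    W1 ρ μ ν ≤ ∫ p, ρ p.1 p.2 ∂π :=
  csInf_le ⟨0, by rintro _ ⟨π', -, -, -, rfl⟩; exact integral_nonneg fun p => hρ p.1 p.2⟩
    ⟨π, ‹_›, h₁, h₂, rfl⟩

lemma le_mul_W1 [IsProbabilityMeasure μ] [IsProbabilityMeasure ν] {a c : ℝ} (hc : 0 ≤ c)
    (h : ∀ π : Measure (X × X), IsProbabilityMeasure π → π.map Prod.fst = μ →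
      π.map Prod.snd = ν → a ≤ c * ∫ p, ρ p.1 p.2 ∂π) :
    a ≤ c * W1 ρ μ ν := by
  have hne : {r : ℝ | ∃ π : Measure (X × X), IsProbabilityMeasure π ∧
      π.map Prod.fst = μ ∧ π.map Prod.snd = ν ∧ r = ∫ p, ρ p.1 p.2 ∂π}.Nonempty :=
    ⟨_, μ.prod ν, inferInstance, by simp, by simp, rfl⟩
  rw [W1, ← smul_eq_mul, ← Real.sInf_smul_of_nonneg hc]
  refine le_csInf hne.smul_set ?_
  rintro _ ⟨_, ⟨π, hπ, h₁, h₂, rfl⟩, rfl⟩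
  exact h π hπ h₁ h₂

lemma W1_map_le {Y : Type*} [MeasurableSpace Y] {ρ : Y → Y → ℝ} (hρ : ∀ x y, 0 ≤ ρ x y)
    (hρm : Measurable (Function.uncurry ρ)) {g : X → Y} (hg : Measurable g)
    (π : Measure (X × X)) [IsProbabilityMeasure π]
    (h₁ : π.map Prod.fst = μ) (h₂ : π.map Prod.snd = ν) :
    W1 ρ (μ.map g) (ν.map g) ≤ ∫ p, ρ (g p.1) (g p.2) ∂π := by
  have hgg : Measurable (Prod.map g g) := hg.prodMap hg
  have := Measure.isProbabilityMeasure_map (μ := π) hgg.aemeasurable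
  calc W1 ρ (μ.map g) (ν.map g) ≤ ∫ q, ρ q.1 q.2 ∂π.map (Prod.map g g) := by
        refine W1_le_integral hρ _ ?_ ?_
        · rw [Measure.map_map measurable_fst hgg, ← h₁, Measure.map_map hg measurable_fst]; rfl
        · rw [Measure.map_map measurable_snd hgg, ← h₂, Measure.map_map hg measurable_snd]; rfl
    _ = ∫ p, ρ (g p.1) (g p.2) ∂π := integral_map hgg.aemeasurable hρm.aestronglyMeasurable

lemma integrable_comp_fst_sub_comp_snd {F : Type*} [NormedAddCommGroup F] {f : X → F}
    (π : Measure (X × X))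
    (h₁ : π.map Prod.fst = μ) (h₂ : π.map Prod.snd = ν)
    (hμ : Integrable f μ) (hν : Integrable f ν) :
    Integrable (fun p => f p.1 - f p.2) π := by
  subst h₁ h₂
  exact ((integrable_map_measure hμ.1 measurable_fst.aemeasurable).1 hμ).sub
    ((integrable_map_measure hν.1 measurable_snd.aemeasurable).1 hν)

end Coupling

section ProductMeasure

variable {ι κ α : Type*} [MeasurableSpace α]

lemma Measure.pi_map_comp_injective [Fintype ι] [Fintype κ] (μ : Measure α)
    [IsProbabilityMeasure μ] {f : ι → κ} (hf : Function.Injective f) :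
    (Measure.pi fun _ : κ => μ).map (fun y i => y (f i)) = Measure.pi fun _ : ι => μ := by
  classical
  refine (Measure.pi_eq fun s hs => ?_).symm
  set t : κ → Set α := Function.extend f s fun _ => Set.univ
  have hpre : (fun (y : κ → α) i => y (f i)) ⁻¹' Set.univ.pi s = Set.univ.pi t := by
    ext y
    simp only [Set.mem_preimage, Set.mem_univ_pi]
    refine ⟨fun hy m => ?_, fun hy i => by simpa [t, hf.extend_apply] using hy (f i)⟩
    by_cases hm : ∃ i, f i = m
    · obtain ⟨i, rfl⟩ := hm
      simpa [t, hf.extend_apply] using hy i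
    · simp [t, Function.extend_apply' _ _ _ hm]
  rw [Measure.map_apply (by fun_prop) (.univ_pi hs), hpre, Measure.pi_pi]
  refine (Fintype.prod_of_injective f hf _ _ (fun m hm => ?_)
    fun i => by simp [t, hf.extend_apply]).symm
  simp [t, Function.extend_apply' _ _ _ (by simpa using hm)]

lemma map_comp_perm_comp {μ : Measure (ι → α)} (σ : Equiv.Perm ι)
    (hσ : μ.map (fun x i => x (σ i)) = μ) (f : κ → ι) :
    μ.map (fun x i => x (σ (f i))) = μ.map (fun x i => x (f i)) := by
  conv_rhs => rw [← hσ]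
  rw [Measure.map_map (by fun_prop) (by fun_prop)]
  rfl

end ProductMeasure

lemma sum_sum_comp_add_eq_card_nsmul {G ι M : Type*} [AddGroup G] [Fintype G] [Fintype ι]
    [AddCommMonoid M] (c : G → M) (a : ι → G) :
    ∑ j, ∑ i, c (a i + j) = Fintype.card ι • ∑ g, c g := by
  rw [Finset.sum_comm, ← Finset.card_univ, ← Finset.sum_const]
  exact Finset.sum_congr rfl fun i _ => Fintype.sum_equiv (Equiv.addLeft (a i)) _ c fun _ => rfl

section EuclideanProduct

variable {d : ℕ}

local notation "E" => EuclideanSpace ℝ (Fin d)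

lemma rho1_nonneg {m : ℕ} (x y : Fin m → E) : 0 ≤ rho1 x y :=
  Finset.sum_nonneg fun _ _ => norm_nonneg _

lemma measurable_uncurry_rho1 {m : ℕ} :
    Measurable (Function.uncurry (rho1 : (Fin m → E) → (Fin m → E) → ℝ)) := by
  unfold rho1 Function.uncurry
  fun_prop

lemma W1_rho1_map_comp_le {k N : ℕ} (f : Fin k → Fin N) {μ₁ μ₂ : Measure (Fin N → E)}
    (π : Measure ((Fin N → E) × (Fin N → E))) [IsProbabilityMeasure π]
    (h₁ : π.map Prod.fst = μ₁) (h₂ : π.map Prod.snd = μ₂)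
    (hπ : ∀ m, Integrable (fun p => ‖p.1 m - p.2 m‖) π) :
    W1 rho1 (μ₁.map fun x i => x (f i)) (μ₂.map fun x i => x (f i)) ≤
      ∑ i, ∫ p, ‖p.1 (f i) - p.2 (f i)‖ ∂π :=
  (W1_map_le rho1_nonneg measurable_uncurry_rho1 (by fun_prop) π h₁ h₂).trans_eq
    (integral_finsetSum _ fun i _ => hπ (f i))

lemma integrable_norm_eval_sub_eval {N : ℕ} {μN : Measure (Fin N → E)} {μ : Measure E}
    [IsProbabilityMeasure μ] (hμN1 : Integrable (fun x => ∑ i, ‖x i‖) μN)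
    (hμ1 : Integrable (fun y => ‖y‖) μ) (π : Measure ((Fin N → E) × (Fin N → E)))
    (h₁ : π.map Prod.fst = μN) (h₂ : π.map Prod.snd = Measure.pi fun _ => μ) (m : Fin N) :
    Integrable (fun p => ‖p.1 m - p.2 m‖) π := by
  have hμN : Integrable (fun x => x m) μN :=
    hμN1.mono' (measurable_pi_apply m).aestronglyMeasurable (ae_of_all _ fun x =>
      Finset.single_le_sum (f := fun i => ‖x i‖) (fun i _ => norm_nonneg _) (Finset.mem_univ m))
  have hμ : Integrable (fun y => y m) (Measure.pi fun _ => μ) :=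
    (measurePreserving_eval _ m).integrable_comp_of_integrable
      ((integrable_norm_iff aestronglyMeasurable_id).1 hμ1)
  exact (integrable_comp_fst_sub_comp_snd π h₁ h₂ hμN hμ).norm

lemma natCast_mul_W1_map_castLE_le {N k : ℕ} [NeZero N] (hkN : k ≤ N)
    {μN : Measure (Fin N → E)} {μ : Measure E} [IsProbabilityMeasure μ]
    (hexch : ∀ σ : Equiv.Perm (Fin N), μN.map (fun x i => x (σ i)) = μN)
    (hμN1 : Integrable (fun x => ∑ i, ‖x i‖) μN) (hμ1 : Integrable (fun y => ‖y‖) μ)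
    (π : Measure ((Fin N → E) × (Fin N → E))) [IsProbabilityMeasure π]
    (h₁ : π.map Prod.fst = μN) (h₂ : π.map Prod.snd = Measure.pi fun _ => μ) :
    N * W1 rho1 (μN.map fun x (i : Fin k) => x (Fin.castLE hkN i)) (Measure.pi fun _ => μ) ≤
      k * ∫ p, rho1 p.1 p.2 ∂π := by
  set c : Fin N → ℝ := fun m => ∫ p, ‖p.1 m - p.2 m‖ ∂π
  have hπ := integrable_norm_eval_sub_eval hμN1 hμ1 π h₁ h₂
  have hwindow (j : Fin N) :
      W1 rho1 (μN.map fun x (i : Fin k) => x (Fin.castLE hkN i)) (Measure.pi fun _ => μ) ≤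
        ∑ i, c (Fin.castLE hkN i + j) := by
    have hshift := map_comp_perm_comp (Equiv.addRight j) (hexch _) (Fin.castLE hkN)
    rw [← hshift, ← Measure.pi_map_comp_injective μ
      ((Equiv.addRight j).injective.comp (Fin.castLE_injective hkN))]
    exact W1_rho1_map_comp_le _ π h₁ h₂ hπ
  calc _ ≤ ∑ j, ∑ i, c (Fin.castLE hkN i + j) := by
        simpa using Finset.card_nsmul_le_sum Finset.univ _ _ fun j _ => hwindow j
    _ = k * ∑ m, c m := by simp [sum_sum_comp_add_eq_card_nsmul]
    _ = k * ∫ p, rho1 p.1 p.2 ∂π := by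
        rw [← integral_finsetSum _ fun m _ => hπ m]
        rfl

end EuclideanProduct

/-- For exchangeable `μ^N ∈ P₁((ℝ^d)^N)` and `μ ∈ P₁(ℝ^d)`,
`W̃₁(μ^N ∘ π_k⁻¹, μ^{⊗k}) ≤ (k/N) W̃₁(μ^N, μ^{⊗N})`. -/
theorem stmt_6 (d N k : ℕ) (hk : 1 ≤ k) (hkN : k ≤ N)
    (μN : Measure (Fin N → EuclideanSpace ℝ (Fin d)))
    [IsProbabilityMeasure μN]
    (μ : Measure (EuclideanSpace ℝ (Fin d))) [IsProbabilityMeasure μ]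
    (hexch : ∀ σ : Equiv.Perm (Fin N),
      μN.map (fun x => fun i => x (σ i)) = μN)
    (hμN1 : Integrable (fun x => ∑ i, ‖x i‖) μN)
    (hμ1 : Integrable (fun y => ‖y‖) μ) :
    W1 rho1 (μN.map (fun x (i : Fin k) => x (Fin.castLE hkN i)))
        (Measure.pi fun _ : Fin k => μ) ≤
      (k : ℝ) / N * W1 rho1 μN (Measure.pi fun _ : Fin N => μ) := by
  have hN : 0 < N := by omega
  have : NeZero N := ⟨hN.ne'⟩
  refine le_mul_W1 (by positivity) fun π _ h₁ h₂ => ?_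
  rw [div_mul_eq_mul_div, le_div_iff₀ (by exact_mod_cast hN), mul_comm]
  exact natCast_mul_W1_map_castLE_le hkN hexch hμN1 hμ1 π h₁ h₂
end

section
/- For the rotationally invariant α-stable Lévy measure ν^α(dz) = c_{d,α} |z|^{−d−α} dz on ℝ^d with α ∈ (0,2), define J^α(s) = inf_{|x| ≤ s} (ν^α ∧ (δ_x ∗ ν^α))(ℝ^d), where (ν^α ∧ (δ_x ∗ ν^α))(dz) = c_{d,α} (|z| ∨ |z − x|)^{−d−α} dz. Then there exists a constant c̃_{d,α} > 0 such that J^α(s) ≥ c̃_{d,α} s^{−α} for all s > 0. -/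
open MeasureTheory ENNReal

/-- Total mass of `ν^α ∧ (δ_x ∗ ν^α)`, i.e. of the measure with density
`c_{d,α} (|z| ∨ |z−x|)^{−d−α}` with respect to Lebesgue measure on `ℝ^d`. -/
noncomputable def minMass (d : ℕ) (α c : ℝ) (x : EuclideanSpace ℝ (Fin d)) : ℝ≥0∞ :=
  ∫⁻ z : EuclideanSpace ℝ (Fin d),
    ENNReal.ofReal (c * (max ‖z‖ ‖z - x‖) ^ (-(d : ℝ) - α))

/-- `J^α(s) = inf_{|x| ≤ s} (ν^α ∧ (δ_x ∗ ν^α))(ℝ^d)`. -/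
noncomputable def Jalpha (d : ℕ) (α c : ℝ) (s : ℝ) : ℝ≥0∞ :=
  ⨅ x : {x : EuclideanSpace ℝ (Fin d) // ‖x‖ ≤ s}, minMass d α c x

/-- For the rotationally invariant `α`-stable Lévy measure, there is `c̃ > 0`
with `J^α(s) ≥ c̃ s^{−α}` for all `s > 0`. -/
theorem stmt_7 (d : ℕ) (hd : 1 ≤ d) (α : ℝ) (hα : α ∈ Set.Ioo (0 : ℝ) 2)
    (c : ℝ) (hc : 0 < c) :
    ∃ ct : ℝ, 0 < ct ∧ ∀ s : ℝ, 0 < s →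
      ENNReal.ofReal (ct * s ^ (-α)) ≤ Jalpha d α c s := by
  obtain ⟨hα0, hα2⟩ := hα
  set V : ℝ≥0∞ := volume (Metric.ball (0 : EuclideanSpace ℝ (Fin d)) 1) with hV
  have hVpos : 0 < V := Metric.measure_ball_pos _ _ one_pos
  have hVlt : V < ⊤ := measure_ball_lt_top
  have hVtR : 0 < V.toReal := ENNReal.toReal_pos hVpos.ne' hVlt.ne
  have he : -(d : ℝ) - α ≤ 0 := by
    have : (0:ℝ) ≤ d := Nat.cast_nonneg d
    linarith
  have h3e : (0:ℝ) < (3:ℝ) ^ (-(d:ℝ) - α) := Real.rpow_pos_of_pos (by norm_num) _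
  refine ⟨c * 3 ^ (-(d:ℝ) - α) * (1/2 : ℝ) ^ d * V.toReal, by positivity, ?_⟩
  intro s hs
  rw [Jalpha, le_iInf_iff]
  rintro ⟨x, hx⟩
  set e1 : EuclideanSpace ℝ (Fin d) := EuclideanSpace.single (⟨0, hd⟩ : Fin d) (1:ℝ) with he1
  have he1n : ‖e1‖ = 1 := by simp [he1, EuclideanSpace.norm_single]
  set z0 : EuclideanSpace ℝ (Fin d) := ((3/2 : ℝ) * s) • e1 with hz0
  have hz0n : ‖z0‖ = (3/2) * s := by
    rw [hz0, norm_smul, he1n, mul_one, Real.norm_eq_abs, abs_of_pos (by positivity)]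
  set A : Set (EuclideanSpace ℝ (Fin d)) := Metric.closedBall z0 (s/2) with hA
  -- pointwise bound on A
  have hbound : ∀ z ∈ A, ENNReal.ofReal (c * (3*s) ^ (-(d:ℝ) - α))
      ≤ ENNReal.ofReal (c * (max ‖z‖ ‖z - x‖) ^ (-(d:ℝ) - α)) := by
    intro z hz
    rw [hA, Metric.mem_closedBall, dist_eq_norm] at hz
    have h1 : s ≤ ‖z‖ := by
      have h := norm_sub_norm_le z0 z
      rw [norm_sub_rev] at h
      have := hz0n
      linarith
    have h2 : ‖z‖ ≤ 2 * s := by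
      have h := norm_add_le (z - z0) z0
      rw [sub_add_cancel] at h
      linarith
    have h3 : ‖z - x‖ ≤ 3 * s := by
      have h := norm_sub_le z x
      linarith
    have hmaxle : max ‖z‖ ‖z - x‖ ≤ 3 * s := max_le (by linarith) h3
    have hmaxpos : 0 < max ‖z‖ ‖z - x‖ := lt_of_lt_of_le hs (h1.trans (le_max_left _ _))
    have := Real.rpow_le_rpow_of_nonpos hmaxpos hmaxle he
    exact ENNReal.ofReal_le_ofReal (mul_le_mul_of_nonneg_left this hc.le)
  have hAvol : volume A = ENNReal.ofReal ((s/2) ^ d) * V := by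
    rw [hA, MeasureTheory.Measure.addHaar_closedBall volume z0 (by positivity)]
    congr 2
    simp [finrank_euclideanSpace_fin]
  calc ENNReal.ofReal (c * 3 ^ (-(d:ℝ) - α) * (1/2 : ℝ) ^ d * V.toReal * s ^ (-α))
      = ENNReal.ofReal (c * (3*s) ^ (-(d:ℝ) - α) * ((s/2) ^ d * V.toReal)) := by
        congr 1
        rw [Real.mul_rpow (by norm_num) hs.le]
        have hsd : (s:ℝ)^d = s ^ (d:ℝ) := (Real.rpow_natCast s d).symm
        have hsplit : ((s/2:ℝ))^d = s^d * (1/2:ℝ)^d := by ring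
        have hcomb : s ^ (-(d:ℝ) - α) * s ^ (d:ℝ) = s ^ (-α) := by
          rw [← Real.rpow_add hs]; congr 1; ring
        calc c * 3 ^ (-(d:ℝ) - α) * (1/2 : ℝ) ^ d * V.toReal * s ^ (-α)
            = c * 3 ^ (-(d:ℝ) - α) * (1/2 : ℝ) ^ d * V.toReal * (s ^ (-(d:ℝ) - α) * s ^ (d:ℝ)) := by
              rw [hcomb]
          _ = c * (3 ^ (-(d:ℝ) - α) * s ^ (-(d:ℝ) - α)) * (s ^ (d:ℝ) * (1/2:ℝ)^d * V.toReal) := by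
              ring
          _ = c * (3 ^ (-(d:ℝ) - α) * s ^ (-(d:ℝ) - α)) * ((s/2)^d * V.toReal) := by
              rw [hsplit, hsd]
    _ = ENNReal.ofReal (c * (3*s) ^ (-(d:ℝ) - α)) * (ENNReal.ofReal ((s/2) ^ d) * V) := by
        rw [ENNReal.ofReal_mul (by positivity), ENNReal.ofReal_mul (by positivity),
          ENNReal.ofReal_mul (by positivity : (0:ℝ) ≤ (s/2)^d), ENNReal.ofReal_toReal hVlt.ne]
    _ = ENNReal.ofReal (c * (3*s) ^ (-(d:ℝ) - α)) * volume A := by rw [hAvol]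
    _ = ∫⁻ _ in A, ENNReal.ofReal (c * (3*s) ^ (-(d:ℝ) - α)) := by
        rw [setLIntegral_const]
    _ ≤ ∫⁻ z in A, ENNReal.ofReal (c * (max ‖z‖ ‖z - x‖) ^ (-(d:ℝ) - α)) :=
        setLIntegral_mono' measurableSet_closedBall hbound
    _ ≤ minMass d α c x := setLIntegral_le_lintegral A _
end

section
/- Let β > 0, K_σ ≥ 0, K_1 ≥ 0, K_2 > K_σ, R > 0 and let γ : [0,∞) → ℝ be defined by γ(r) = K_1 r for r ≤ R, γ(r) = (−(K_1+K_2)(r−R)/R + K_1) r for R ≤ r ≤ 2R, and γ(r) = −K_2 r for r > 2R. Set γ̃(v) = γ(v) + K_σ v and f(r) = ∫_0^r e^{−(1/(2β))∫_0^u γ̃(v)dv} ∫_u^∞ s e^{(1/(2β))∫_0^s γ̃(v)dv} ds du. Then f'' ≤ 0 on (0,∞) (where defined), f is concave, and (2β/(K_2 − K_σ)) r ≤ f(r) ≤ f'(0) r for all r ≥ 0. -/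
open MeasureTheory Set

/-- The partially dissipative rate function `γ`. -/
noncomputable def gammaFun (K₁ K₂ R : ℝ) (r : ℝ) : ℝ :=
  if r ≤ R then K₁ * r
  else if r ≤ 2 * R then (-(K₁ + K₂) / R * (r - R) + K₁) * r
  else -K₂ * r

/-- `γ̃(v) = γ(v) + K_σ v`. -/
noncomputable def gammaTilde (K₁ K₂ R Kσ : ℝ) (v : ℝ) : ℝ :=
  gammaFun K₁ K₂ R v + Kσ * v

/-- The reflection-coupling distance function
`f(r) = ∫_0^r e^{−(1/2β)∫_0^u γ̃} ∫_u^∞ s e^{(1/2β)∫_0^s γ̃} ds du`. -/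
noncomputable def refF (β K₁ K₂ R Kσ : ℝ) (r : ℝ) : ℝ :=
  ∫ u in (0 : ℝ)..r,
    Real.exp (-(1 / (2 * β)) * ∫ v in (0 : ℝ)..u, gammaTilde K₁ K₂ R Kσ v) *
      ∫ s in Ioi u,
        s * Real.exp ((1 / (2 * β)) * ∫ v in (0 : ℝ)..s, gammaTilde K₁ K₂ R Kσ v)

/-!
Write `c = 1/(2β)`, `G = ∫₀ γ̃` (`ratePrimitive`) and `Φ = f'` (`distFunDeriv`), so that
`Φ(u) = e^{-cG(u)} ∫_u^∞ s e^{cG(s)} ds` and `Φ' = -c γ̃ Φ - u`. Only three features of `g = γ̃` matter: continuity, `g(v) = -κ v` beyond some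
`M` (with `κ = K₂ - K_σ > 0`), and the monotonicity of `g(v)/v` on `(0, ∞)`, stated without
division as `r * g s ≤ g r * s` for `0 ≤ r ≤ s`. Since `g e^{cG} = (e^{cG}/c)'` and `e^{cG} → 0`,
monotonicity gives `g(r) ∫_r^∞ s e^{cG} ≥ r ∫_r^∞ g e^{cG} = -(r/c) e^{cG(r)}`, i.e. `Φ' ≤ 0`; and
the consequence `g(s) ≥ -κ s` gives `κ ∫_r^∞ s e^{cG} ≥ e^{cG(r)}/c`, i.e. `Φ ≥ 1/(cκ) = 2β/κ`.
Integrating `2β/κ ≤ Φ ≤ Φ(0)` over `[0, r]` bounds `f`.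
-/

open Filter Topology

theorem Continuous.integrableOn_Ioi_of_integrableOn_Ioi {E : Type*} [NormedAddCommGroup E]
    {f : ℝ → E} (hf : Continuous f) {b : ℝ} (hb : IntegrableOn f (Ioi b)) (a : ℝ) :
    IntegrableOn f (Ioi a) :=
  (hf.integrableOn_Ioc.union hb).mono_set Ioi_subset_Ioc_union_Ioi

theorem hasDerivAt_integral_Ioi {E : Type*} [NormedAddCommGroup E] [NormedSpace ℝ E]
    [CompleteSpace E] {f : ℝ → E} (hf : Continuous f)
    (hint : ∀ a, IntegrableOn f (Ioi a)) (u : ℝ) :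
    HasDerivAt (fun u => ∫ s in Ioi u, f s) (-f u) u := by
  have h : (fun u => ∫ s in Ioi u, f s) = fun u => (∫ s in Ioi 0, f s) - ∫ s in (0 : ℝ)..u, f s :=
    funext fun u => by
      rw [← intervalIntegral.integral_Ioi_sub_Ioi' (hint 0) (hint u), sub_sub_cancel]
  rw [h]
  exact (hf.integral_hasStrictDerivAt 0 u).hasDerivAt.const_sub _

noncomputable def ratePrimitive (g : ℝ → ℝ) (u : ℝ) : ℝ := ∫ v in (0 : ℝ)..u, g v

noncomputable def distFunDeriv (c : ℝ) (g : ℝ → ℝ) (u : ℝ) : ℝ :=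
  Real.exp (-c * ratePrimitive g u) * ∫ s in Ioi u, s * Real.exp (c * ratePrimitive g s)

noncomputable def distFun (c : ℝ) (g : ℝ → ℝ) (r : ℝ) : ℝ := ∫ u in (0 : ℝ)..r, distFunDeriv c g u

section DistFun

variable {g : ℝ → ℝ} {c κ M : ℝ}

theorem hasDerivAt_ratePrimitive (hg : Continuous g) (u : ℝ) :
    HasDerivAt (ratePrimitive g) (g u) u :=
  (hg.integral_hasStrictDerivAt 0 u).hasDerivAt

theorem continuous_ratePrimitive (hg : Continuous g) : Continuous (ratePrimitive g) :=
  continuous_iff_continuousAt.2 fun u => (hasDerivAt_ratePrimitive hg u).continuousAt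

theorem ratePrimitive_of_le (hg : Continuous g) (htail : ∀ v, M ≤ v → g v = -κ * v) {s : ℝ}
    (hs : M ≤ s) : ratePrimitive g s = ratePrimitive g M - κ * (s ^ 2 - M ^ 2) / 2 := by
  have h := intervalIntegral.integral_interval_sub_left (hg.intervalIntegrable (μ := volume) 0 s)
    (hg.intervalIntegrable 0 M)
  have htail_int : ∫ v in M..s, g v = ∫ v in M..s, -κ * v :=
    intervalIntegral.integral_congr fun v hv => htail v (by rw [uIcc_of_le hs] at hv; exact hv.1)
  rw [htail_int, intervalIntegral.integral_const_mul, integral_id] at h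
  unfold ratePrimitive
  linarith

theorem tendsto_exp_ratePrimitive (hg : Continuous g) (hc : 0 < c) (hκ : 0 < κ)
    (htail : ∀ v, M ≤ v → g v = -κ * v) :
    Tendsto (fun s => Real.exp (c * ratePrimitive g s)) atTop (𝓝 0) := by
  refine Real.tendsto_exp_atBot.comp ?_
  have hquad : Tendsto (fun s : ℝ => -(c * κ / 2) * s ^ 2 +
      c * (ratePrimitive g M + κ * M ^ 2 / 2)) atTop atBot :=
    tendsto_atBot_add_const_right _ _ <|
      (tendsto_pow_atTop two_ne_zero).const_mul_atTop_of_neg (by nlinarith)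
  refine hquad.congr' ?_
  filter_upwards [eventually_ge_atTop M] with s hs
  rw [ratePrimitive_of_le hg htail hs]
  ring

theorem hasDerivAt_exp_ratePrimitive (hg : Continuous g) (hc : c ≠ 0) (x : ℝ) :
    HasDerivAt (fun s => c⁻¹ * Real.exp (c * ratePrimitive g s))
      (g x * Real.exp (c * ratePrimitive g x)) x := by
  refine ((((hasDerivAt_ratePrimitive hg x).const_mul c).exp).const_mul c⁻¹).congr_deriv ?_
  field_simp

theorem integrableOn_Ioi_rate_mul_exp (hg : Continuous g) (hc : 0 < c) (hκ : 0 < κ)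
    (htail : ∀ v, M ≤ v → g v = -κ * v) (a : ℝ) :
    IntegrableOn (fun s => g s * Real.exp (c * ratePrimitive g s)) (Ioi a) := by
  have := continuous_ratePrimitive hg
  refine Continuous.integrableOn_Ioi_of_integrableOn_Ioi (by fun_prop) (b := max M 0) ?_ a
  refine integrableOn_Ioi_deriv_of_nonpos' (fun x _ => hasDerivAt_exp_ratePrimitive hg hc.ne' x)
    (fun s hs => ?_) (by simpa using (tendsto_exp_ratePrimitive hg hc hκ htail).const_mul c⁻¹)
  rw [htail s (le_max_left M 0 |>.trans hs.out.le)]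
  have hs0 : 0 ≤ s := le_max_right M 0 |>.trans hs.out.le
  nlinarith [mul_nonneg (mul_nonneg hκ.le hs0) (Real.exp_pos (c * ratePrimitive g s)).le]

theorem integral_Ioi_rate_mul_exp (hg : Continuous g) (hc : 0 < c) (hκ : 0 < κ)
    (htail : ∀ v, M ≤ v → g v = -κ * v) (r : ℝ) :
    ∫ s in Ioi r, g s * Real.exp (c * ratePrimitive g s) =
      -(c⁻¹ * Real.exp (c * ratePrimitive g r)) := by
  rw [integral_Ioi_of_hasDerivAt_of_tendsto' (fun x _ => hasDerivAt_exp_ratePrimitive hg hc.ne' x)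
    (integrableOn_Ioi_rate_mul_exp hg hc hκ htail r)
    (by simpa using (tendsto_exp_ratePrimitive hg hc hκ htail).const_mul c⁻¹), zero_sub]

theorem integrableOn_Ioi_mul_exp_ratePrimitive (hg : Continuous g) (hc : 0 < c) (hκ : 0 < κ)
    (htail : ∀ v, M ≤ v → g v = -κ * v) (a : ℝ) :
    IntegrableOn (fun s => s * Real.exp (c * ratePrimitive g s)) (Ioi a) := by
  have := continuous_ratePrimitive hg
  refine Continuous.integrableOn_Ioi_of_integrableOn_Ioi (by fun_prop) (b := M) ?_ a
  refine IntegrableOn.congr_fun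
    ((integrableOn_Ioi_rate_mul_exp hg hc hκ htail M).const_mul (-κ⁻¹)) (fun s hs => ?_)
    measurableSet_Ioi
  simp only [htail s hs.out.le]
  field_simp

theorem exp_neg_mul_mul_exp_mul (c x : ℝ) : Real.exp (-c * x) * Real.exp (c * x) = 1 := by
  rw [← Real.exp_add, neg_mul, neg_add_cancel, Real.exp_zero]

theorem hasDerivAt_distFunDeriv (hg : Continuous g) (hc : 0 < c) (hκ : 0 < κ)
    (htail : ∀ v, M ≤ v → g v = -κ * v) (u : ℝ) :
    HasDerivAt (distFunDeriv c g) (-c * g u * distFunDeriv c g u - u) u := by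
  have := continuous_ratePrimitive hg
  have hweight := hasDerivAt_integral_Ioi (by fun_prop)
    (integrableOn_Ioi_mul_exp_ratePrimitive hg hc hκ htail) u
  refine ((((hasDerivAt_ratePrimitive hg u).const_mul (-c)).exp).mul hweight).congr_deriv ?_
  unfold distFunDeriv
  linear_combination (-u) * exp_neg_mul_mul_exp_mul c (ratePrimitive g u)

theorem continuous_distFunDeriv (hg : Continuous g) (hc : 0 < c) (hκ : 0 < κ)
    (htail : ∀ v, M ≤ v → g v = -κ * v) : Continuous (distFunDeriv c g) :=
  continuous_iff_continuousAt.2 fun u => (hasDerivAt_distFunDeriv hg hc hκ htail u).continuousAt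

theorem hasDerivAt_distFun (hg : Continuous g) (hc : 0 < c) (hκ : 0 < κ)
    (htail : ∀ v, M ≤ v → g v = -κ * v) (r : ℝ) :
    HasDerivAt (distFun c g) (distFunDeriv c g r) r :=
  ((continuous_distFunDeriv hg hc hκ htail).integral_hasStrictDerivAt 0 r).hasDerivAt

theorem neg_mul_le_of_ratio_le (hratio : ∀ r s, 0 ≤ r → r ≤ s → r * g s ≤ g r * s)
    (htail : ∀ v, M ≤ v → g v = -κ * v) {v : ℝ} (hv : 0 < v) : -κ * v ≤ g v := by
  have hs : 0 < max v M := hv.trans_le (le_max_left v M)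
  have h := hratio v (max v M) hv.le (le_max_left v M)
  rw [htail _ (le_max_right v M)] at h
  exact le_of_mul_le_mul_right (by linarith) hs

theorem neg_le_mul_rate_mul_distFunDeriv (hg : Continuous g) (hc : 0 < c) (hκ : 0 < κ)
    (htail : ∀ v, M ≤ v → g v = -κ * v) (hratio : ∀ r s, 0 ≤ r → r ≤ s → r * g s ≤ g r * s)
    {r : ℝ} (hr : 0 ≤ r) : -r ≤ c * g r * distFunDeriv c g r := by
  have hint_le : ∫ s in Ioi r, r * (g s * Real.exp (c * ratePrimitive g s)) ≤
      ∫ s in Ioi r, g r * (s * Real.exp (c * ratePrimitive g s)) := by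
    refine setIntegral_mono_on ((integrableOn_Ioi_rate_mul_exp hg hc hκ htail r).const_mul r)
      ((integrableOn_Ioi_mul_exp_ratePrimitive hg hc hκ htail r).const_mul (g r))
      measurableSet_Ioi fun s hs => ?_
    have := mul_le_mul_of_nonneg_right (hratio r s hr hs.out.le)
      (Real.exp_pos (c * ratePrimitive g s)).le
    linarith
  rw [integral_const_mul, integral_const_mul, integral_Ioi_rate_mul_exp hg hc hκ htail] at hint_le
  have hexp := exp_neg_mul_mul_exp_mul c (ratePrimitive g r)
  calc -r = c * Real.exp (-c * ratePrimitive g r) *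
        (r * -(c⁻¹ * Real.exp (c * ratePrimitive g r))) := by
        rw [show ∀ X Y : ℝ, c * X * (r * -(c⁻¹ * Y)) = -r * (c * c⁻¹) * (X * Y) by intros; ring,
          hexp, mul_inv_cancel₀ hc.ne', mul_one, mul_one]
    _ ≤ c * Real.exp (-c * ratePrimitive g r) *
        (g r * ∫ s in Ioi r, s * Real.exp (c * ratePrimitive g s)) := by
        gcongr
    _ = c * g r * distFunDeriv c g r := by
        unfold distFunDeriv
        ring

theorem inv_mul_le_distFunDeriv (hg : Continuous g) (hc : 0 < c) (hκ : 0 < κ)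
    (htail : ∀ v, M ≤ v → g v = -κ * v) (hratio : ∀ r s, 0 ≤ r → r ≤ s → r * g s ≤ g r * s)
    {r : ℝ} (hr : 0 ≤ r) : (c * κ)⁻¹ ≤ distFunDeriv c g r := by
  rw [inv_le_iff_one_le_mul₀' (by positivity)]
  have hint_le : ∫ s in Ioi r, -(g s * Real.exp (c * ratePrimitive g s)) ≤
      ∫ s in Ioi r, κ * (s * Real.exp (c * ratePrimitive g s)) := by
    refine setIntegral_mono_on (integrableOn_Ioi_rate_mul_exp hg hc hκ htail r).neg
      ((integrableOn_Ioi_mul_exp_ratePrimitive hg hc hκ htail r).const_mul κ)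
      measurableSet_Ioi fun s hs => ?_
    have := mul_le_mul_of_nonneg_right (neg_mul_le_of_ratio_le hratio htail (hr.trans_lt hs))
      (Real.exp_pos (c * ratePrimitive g s)).le
    linarith
  rw [integral_neg, integral_const_mul, integral_Ioi_rate_mul_exp hg hc hκ htail, neg_neg]
    at hint_le
  have hexp := exp_neg_mul_mul_exp_mul c (ratePrimitive g r)
  calc 1 = c * Real.exp (-c * ratePrimitive g r) *
        (c⁻¹ * Real.exp (c * ratePrimitive g r)) := by
        rw [show ∀ X Y : ℝ, c * X * (c⁻¹ * Y) = (c * c⁻¹) * (X * Y) by intros; ring,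
          hexp, mul_inv_cancel₀ hc.ne', mul_one]
    _ ≤ c * Real.exp (-c * ratePrimitive g r) *
        (κ * ∫ s in Ioi r, s * Real.exp (c * ratePrimitive g s)) := by
        gcongr
    _ = c * κ * distFunDeriv c g r := by
        unfold distFunDeriv
        ring

theorem deriv_distFun (hg : Continuous g) (hc : 0 < c) (hκ : 0 < κ)
    (htail : ∀ v, M ≤ v → g v = -κ * v) : deriv (distFun c g) = distFunDeriv c g :=
  funext fun r => (hasDerivAt_distFun hg hc hκ htail r).deriv

theorem deriv_distFunDeriv_nonpos (hg : Continuous g) (hc : 0 < c) (hκ : 0 < κ)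
    (htail : ∀ v, M ≤ v → g v = -κ * v) (hratio : ∀ r s, 0 ≤ r → r ≤ s → r * g s ≤ g r * s)
    {r : ℝ} (hr : 0 ≤ r) : deriv (distFunDeriv c g) r ≤ 0 := by
  rw [(hasDerivAt_distFunDeriv hg hc hκ htail r).deriv]
  linarith [neg_le_mul_rate_mul_distFunDeriv hg hc hκ htail hratio hr]

theorem antitoneOn_distFunDeriv (hg : Continuous g) (hc : 0 < c) (hκ : 0 < κ)
    (htail : ∀ v, M ≤ v → g v = -κ * v) (hratio : ∀ r s, 0 ≤ r → r ≤ s → r * g s ≤ g r * s) :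
    AntitoneOn (distFunDeriv c g) (Ici 0) :=
  antitoneOn_of_deriv_nonpos (convex_Ici 0) (continuous_distFunDeriv hg hc hκ htail).continuousOn
    (fun x _ => (hasDerivAt_distFunDeriv hg hc hκ htail x).differentiableAt.differentiableWithinAt)
    fun _ hx => deriv_distFunDeriv_nonpos hg hc hκ htail hratio (interior_Ici.subset hx).out.le

theorem concaveOn_distFun (hg : Continuous g) (hc : 0 < c) (hκ : 0 < κ)
    (htail : ∀ v, M ≤ v → g v = -κ * v) (hratio : ∀ r s, 0 ≤ r → r ≤ s → r * g s ≤ g r * s) :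
    ConcaveOn ℝ (Ici 0) (distFun c g) := by
  have hdiff r := (hasDerivAt_distFun hg hc hκ htail r).differentiableAt
  refine AntitoneOn.concaveOn_of_deriv (convex_Ici 0)
    (fun x _ => (hdiff x).continuousAt.continuousWithinAt)
    (fun x _ => (hdiff x).differentiableWithinAt) ?_
  rw [deriv_distFun hg hc hκ htail]
  exact (antitoneOn_distFunDeriv hg hc hκ htail hratio).mono interior_subset

theorem div_le_distFun (hg : Continuous g) (hc : 0 < c) (hκ : 0 < κ)
    (htail : ∀ v, M ≤ v → g v = -κ * v) (hratio : ∀ r s, 0 ≤ r → r ≤ s → r * g s ≤ g r * s)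
    {r : ℝ} (hr : 0 ≤ r) : r / (c * κ) ≤ distFun c g r := by
  have h := intervalIntegral.integral_mono_on (μ := volume) hr intervalIntegrable_const
    ((continuous_distFunDeriv hg hc hκ htail).intervalIntegrable 0 r)
    fun u hu => inv_mul_le_distFunDeriv hg hc hκ htail hratio hu.1
  rw [intervalIntegral.integral_const, smul_eq_mul, sub_zero] at h
  exact (div_eq_mul_inv r _).trans_le h

theorem distFun_le_mul (hg : Continuous g) (hc : 0 < c) (hκ : 0 < κ)
    (htail : ∀ v, M ≤ v → g v = -κ * v) (hratio : ∀ r s, 0 ≤ r → r ≤ s → r * g s ≤ g r * s)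
    {r : ℝ} (hr : 0 ≤ r) : distFun c g r ≤ distFunDeriv c g 0 * r := by
  have h := intervalIntegral.integral_mono_on (μ := volume) hr
    ((continuous_distFunDeriv hg hc hκ htail).intervalIntegrable 0 r) intervalIntegrable_const
    fun u hu => antitoneOn_distFunDeriv hg hc hκ htail hratio self_mem_Ici hu.1 hu.1
  rw [intervalIntegral.integral_const, smul_eq_mul, sub_zero] at h
  exact h.trans_eq (mul_comm _ _)

end DistFun

section GammaTilde

variable {K₁ K₂ R Kσ : ℝ}

/-- `γ(r) = gammaSlope r * r`; the slope is `K₁` up to `R`, `-K₂` from `2R` on, linear between. -/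
noncomputable def gammaSlope (K₁ K₂ R : ℝ) (r : ℝ) : ℝ :=
  K₁ - (K₁ + K₂) * max 0 (min 1 ((r - R) / R))

theorem gammaFun_eq_gammaSlope_mul (hR : 0 < R) (r : ℝ) :
    gammaFun K₁ K₂ R r = gammaSlope K₁ K₂ R r * r := by
  unfold gammaFun gammaSlope
  split_ifs with h₁ h₂
  · have : (r - R) / R ≤ 0 := div_nonpos_of_nonpos_of_nonneg (by linarith) hR.le
    rw [min_eq_right (this.trans zero_le_one), max_eq_left this]
    ring
  · have h₀ : 0 ≤ (r - R) / R := div_nonneg (by linarith) hR.le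
    have h₁ : (r - R) / R ≤ 1 := (div_le_one hR).2 (by linarith)
    rw [min_eq_right h₁, max_eq_right h₀]
    ring
  · have : 1 ≤ (r - R) / R := (one_le_div hR).2 (by linarith)
    rw [min_eq_left this, max_eq_right zero_le_one]
    ring

theorem gammaSlope_of_two_mul_le (hR : 0 < R) {r : ℝ} (hr : 2 * R ≤ r) :
    gammaSlope K₁ K₂ R r = -K₂ := by
  have : 1 ≤ (r - R) / R := (one_le_div hR).2 (by linarith)
  rw [gammaSlope, min_eq_left this, max_eq_right zero_le_one]
  ring

theorem antitone_gammaSlope (hK : 0 ≤ K₁ + K₂) (hR : 0 < R) : Antitone (gammaSlope K₁ K₂ R) := by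
  intro r s hrs
  unfold gammaSlope
  gcongr

theorem gammaTilde_eq_mul (hR : 0 < R) :
    gammaTilde K₁ K₂ R Kσ = fun v => (gammaSlope K₁ K₂ R v + Kσ) * v := by
  ext v
  rw [gammaTilde, gammaFun_eq_gammaSlope_mul hR]
  ring

theorem continuous_gammaTilde (hR : 0 < R) : Continuous (gammaTilde K₁ K₂ R Kσ) := by
  rw [gammaTilde_eq_mul hR]
  unfold gammaSlope
  fun_prop

theorem gammaTilde_of_two_mul_le (hR : 0 < R) {v : ℝ} (hv : 2 * R ≤ v) :
    gammaTilde K₁ K₂ R Kσ v = -(K₂ - Kσ) * v := by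
  rw [gammaTilde, gammaFun_eq_gammaSlope_mul hR, gammaSlope_of_two_mul_le hR hv]
  ring

theorem mul_gammaTilde_le (hK : 0 ≤ K₁ + K₂) (hR : 0 < R) {r s : ℝ} (hr : 0 ≤ r) (hrs : r ≤ s) :
    r * gammaTilde K₁ K₂ R Kσ s ≤ gammaTilde K₁ K₂ R Kσ r * s := by
  have hslope := antitone_gammaSlope hK hR hrs
  simp only [gammaTilde_eq_mul hR]
  nlinarith [mul_nonneg (sub_nonneg.2 hslope) (mul_nonneg hr (hr.trans hrs))]

end GammaTilde

/-- `f'' ≤ 0` on `(0,∞)`, `f` is concave on `[0,∞)`, and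
`(2β/(K₂−K_σ)) r ≤ f(r) ≤ f'(0) r` for all `r ≥ 0`. -/
theorem stmt_9 (β Kσ K₁ K₂ R : ℝ) (hβ : 0 < β) (hKσ : 0 ≤ Kσ) (hK₁ : 0 ≤ K₁)
    (hK₂ : Kσ < K₂) (hR : 0 < R) :
    (∀ r : ℝ, 0 < r → deriv (deriv (refF β K₁ K₂ R Kσ)) r ≤ 0) ∧
      ConcaveOn ℝ (Ici 0) (refF β K₁ K₂ R Kσ) ∧
      ∀ r : ℝ, 0 ≤ r →
        2 * β / (K₂ - Kσ) * r ≤ refF β K₁ K₂ R Kσ r ∧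
          refF β K₁ K₂ R Kσ r ≤ deriv (refF β K₁ K₂ R Kσ) 0 * r := by
  have hg : Continuous (gammaTilde K₁ K₂ R Kσ) := continuous_gammaTilde hR
  have hc : 0 < 1 / (2 * β) := by positivity
  have hκ : 0 < K₂ - Kσ := sub_pos.2 hK₂
  have htail : ∀ v, 2 * R ≤ v → gammaTilde K₁ K₂ R Kσ v = -(K₂ - Kσ) * v :=
    fun _ hv => gammaTilde_of_two_mul_le hR hv
  have hratio : ∀ r s, 0 ≤ r → r ≤ s →
      r * gammaTilde K₁ K₂ R Kσ s ≤ gammaTilde K₁ K₂ R Kσ r * s :=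
    fun _ _ hr hrs => mul_gammaTilde_le (by linarith) hR hr hrs
  have hf : refF β K₁ K₂ R Kσ = distFun (1 / (2 * β)) (gammaTilde K₁ K₂ R Kσ) := rfl
  have hconst : 2 * β / (K₂ - Kσ) = (1 / (2 * β) * (K₂ - Kσ))⁻¹ := by field_simp
  rw [hf, deriv_distFun hg hc hκ htail, hconst]
  refine ⟨fun r hr => deriv_distFunDeriv_nonpos hg hc hκ htail hratio hr.le,
    concaveOn_distFun hg hc hκ htail hratio,
    fun r hr => ⟨?_, distFun_le_mul hg hc hκ htail hratio hr⟩⟩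
  rw [← div_eq_inv_mul]
  exact div_le_distFun hg hc hκ htail hratio hr
end

section
/- Let ψ : [0,∞) → [0,∞) be C^2 on (0, 2ℓ_0) ∪ (2ℓ_0, ∞) with ψ'' ≤ 0, ψ''' ≥ 0 and ψ⁽⁴⁾ ≤ 0 there, and ψ continuous, increasing, concave on [0,∞). Then for any κ > 0 and all r ≥ 0, ψ(r − r∧κ) + ψ(r + r∧κ) − 2ψ(r) ≤ 0; moreover if r + r∧κ ≤ 2ℓ_0, then ψ(r − r∧κ) + ψ(r + r∧κ) − 2ψ(r) ≤ ψ''(r) (r∧κ)². -/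
/-!
The first inequality is midpoint concavity of `ψ`. For the second put `δ = r ∧ κ`, `c = ψ''(r)` and
`g(t) = ψ(r - t) + ψ(r + t) - 2ψ(r) - c t²`. Then `g(0) = g'(0) = 0` and
`g''(t) = ψ''(r + t) + ψ''(r - t) - 2ψ''(r) ≤ 0` on `(0, δ)`, because `ψ⁽⁴⁾ ≤ 0` makes `ψ''` concave
on `(0, 2ℓ₀)`. Hence `g'` and then `g` are nonpositive on `[0, δ]`; at the endpoints `r ± δ`, which
may be `0` or `2ℓ₀`, only continuity of `ψ` is needed.
-/

open Set

theorem ConcaveOn.add_le_two_mul {s : Set ℝ} {f : ℝ → ℝ} (hf : ConcaveOn ℝ s f) {x h : ℝ}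
    (hl : x - h ∈ s) (hr : x + h ∈ s) : f (x - h) + f (x + h) ≤ 2 * f x := by
  have := hf.2 hl hr (by norm_num : (0 : ℝ) ≤ 1 / 2) (by norm_num : (0 : ℝ) ≤ 1 / 2) (by norm_num)
  rw [smul_eq_mul, smul_eq_mul, smul_eq_mul, smul_eq_mul,
    show 1 / 2 * (x - h) + 1 / 2 * (x + h) = x by ring] at this
  linarith

theorem ContDiffOn.hasDerivAt_iteratedDeriv {f : ℝ → ℝ} {s : Set ℝ} {n k : ℕ}
    (hf : ContDiffOn ℝ n f s) (hs : IsOpen s) (hk : k < n) {x : ℝ} (hx : x ∈ s) :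
    HasDerivAt (iteratedDeriv k f) (iteratedDeriv (k + 1) f x) x := by
  have hdiff : DifferentiableAt ℝ (iteratedDerivWithin k f s) x :=
    (hf.differentiableOn_iteratedDerivWithin (by exact_mod_cast hk) hs.uniqueDiffOn x hx
      ).differentiableAt (hs.mem_nhds hx)
  have heq : iteratedDerivWithin k f s =ᶠ[nhds x] iteratedDeriv k f :=
    Filter.eventually_of_mem (hs.mem_nhds hx) (iteratedDerivWithin_of_isOpen hs)
  rw [iteratedDeriv_succ]
  exact (hdiff.congr_of_eventuallyEq heq.symm).hasDerivAt

theorem concaveOn_iteratedDeriv_two {f : ℝ → ℝ} {s : Set ℝ} (hs : IsOpen s) (hs' : Convex ℝ s)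
    (hf : ContDiffOn ℝ 4 f s) (h4 : ∀ x ∈ s, iteratedDeriv 4 f x ≤ 0) :
    ConcaveOn ℝ s (iteratedDeriv 2 f) := by
  have hd : ∀ k < 4, ∀ x ∈ s, HasDerivAt (iteratedDeriv k f) (iteratedDeriv (k + 1) f x) x :=
    fun k hk x hx => hf.hasDerivAt_iteratedDeriv hs (by exact_mod_cast hk) hx
  refine concaveOn_of_hasDerivWithinAt2_nonpos (f' := iteratedDeriv 3 f)
    (f'' := iteratedDeriv 4 f) hs' ?_ ?_ ?_ ?_
  · exact fun x hx => (hd 2 (by norm_num) x hx).continuousAt.continuousWithinAt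
  all_goals rw [hs.interior_eq]
  · exact fun x hx => (hd 2 (by norm_num) x hx).hasDerivWithinAt
  · exact fun x hx => (hd 3 (by norm_num) x hx).hasDerivWithinAt
  · exact h4

theorem sub_le_two_mul_of_concaveOn_deriv {f' f'' : ℝ → ℝ} {r δ t : ℝ}
    (hf'' : ∀ x ∈ Ioo (r - δ) (r + δ), HasDerivAt f' (f'' x) x)
    (hconc : ConcaveOn ℝ (Ioo (r - δ) (r + δ)) f'') (ht : t ∈ Ico 0 δ) :
    f' (r + t) - f' (r - t) ≤ 2 * f'' r * t := by
  have hmem : ∀ t ∈ Ico 0 δ, r - t ∈ Ioo (r - δ) (r + δ) ∧ r + t ∈ Ioo (r - δ) (r + δ) :=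
    fun t ⟨h0, hδ⟩ => ⟨⟨by linarith, by linarith⟩, ⟨by linarith, by linarith⟩⟩
  set φ : ℝ → ℝ := fun t => f' (r + t) - f' (r - t) - 2 * f'' r * t
  have hφ : ∀ t ∈ Ico 0 δ, HasDerivAt φ (f'' (r + t) + f'' (r - t) - 2 * f'' r) t := by
    intro t ht
    have : HasDerivAt φ _ t := (((hf'' _ (hmem t ht).2).comp_const_add r t).sub
      ((hf'' _ (hmem t ht).1).comp_const_sub r t)).sub ((hasDerivAt_id t).const_mul (2 * f'' r))
    exact this.congr_deriv (by ring)
  have hanti : AntitoneOn φ (Ico 0 δ) := by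
    refine antitoneOn_of_hasDerivWithinAt_nonpos (convex_Ico 0 δ)
      (f' := fun t => f'' (r + t) + f'' (r - t) - 2 * f'' r)
      (fun t ht => (hφ t ht).continuousAt.continuousWithinAt) ?_ ?_ <;> rw [interior_Ico]
    · exact fun t ht => (hφ t (Ioo_subset_Ico_self ht)).hasDerivWithinAt
    · intro t ht
      obtain ⟨hl, hr⟩ := hmem t (Ioo_subset_Ico_self ht)
      linarith [hconc.add_le_two_mul hl hr]
  have := hanti ⟨le_rfl, ht.1.trans_lt ht.2⟩ ht ht.1
  simp only [φ, add_zero, sub_zero, mul_zero, sub_self] at this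
  linarith

theorem add_sub_two_mul_le_of_concaveOn_deriv2 {f f' f'' : ℝ → ℝ} {r δ : ℝ} (hδ : 0 ≤ δ)
    (hf : ContinuousOn f (Icc (r - δ) (r + δ)))
    (hf' : ∀ x ∈ Ioo (r - δ) (r + δ), HasDerivAt f (f' x) x)
    (hf'' : ∀ x ∈ Ioo (r - δ) (r + δ), HasDerivAt f' (f'' x) x)
    (hconc : ConcaveOn ℝ (Ioo (r - δ) (r + δ)) f'') :
    f (r - δ) + f (r + δ) - 2 * f r ≤ f'' r * δ ^ 2 := by
  set g : ℝ → ℝ := fun t => f (r - t) + f (r + t) - 2 * f r - f'' r * t ^ 2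
  have hg : ∀ t ∈ Ioo 0 δ, HasDerivAt g (f' (r + t) - f' (r - t) - 2 * f'' r * t) t := by
    intro t ⟨h0, htδ⟩
    have hl : r - t ∈ Ioo (r - δ) (r + δ) := ⟨by linarith, by linarith⟩
    have hr : r + t ∈ Ioo (r - δ) (r + δ) := ⟨by linarith, by linarith⟩
    have : HasDerivAt g _ t := ((((hf' _ hl).comp_const_sub r t).add
      ((hf' _ hr).comp_const_add r t)).sub_const (2 * f r)).sub
      ((hasDerivAt_pow 2 t).const_mul (f'' r))
    exact this.congr_deriv (by norm_num; ring)
  have hg_cont : ContinuousOn g (Icc 0 δ) := by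
    have hl : MapsTo (r - ·) (Icc 0 δ) (Icc (r - δ) (r + δ)) :=
      fun t ⟨h0, hδ⟩ => ⟨by linarith, by linarith⟩
    have hr : MapsTo (r + ·) (Icc 0 δ) (Icc (r - δ) (r + δ)) :=
      fun t ⟨h0, hδ⟩ => ⟨by linarith, by linarith⟩
    exact (((hf.comp (by fun_prop) hl).add (hf.comp (by fun_prop) hr)).sub continuousOn_const).sub
      (by fun_prop)
  have hanti : AntitoneOn g (Icc 0 δ) := by
    refine antitoneOn_of_hasDerivWithinAt_nonpos (convex_Icc 0 δ) hg_cont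
      (f' := fun t => f' (r + t) - f' (r - t) - 2 * f'' r * t) ?_ ?_ <;> rw [interior_Icc]
    · exact fun t ht => (hg t ht).hasDerivWithinAt
    · intro t ht
      linarith [sub_le_two_mul_of_concaveOn_deriv hf'' hconc (Ioo_subset_Ico_self ht)]
  have := hanti ⟨le_rfl, hδ⟩ ⟨hδ, le_rfl⟩ hδ
  norm_num [g] at this
  linarith

theorem stmt_13_general (ℓ₀ : ℝ) (ψ : ℝ → ℝ)
    (hcont : ContinuousOn ψ (Ici 0))
    (hconc : ConcaveOn ℝ (Ici 0) ψ)
    (hC4 : ContDiffOn ℝ 4 ψ (Ioo 0 (2 * ℓ₀) ∪ Ioi (2 * ℓ₀)))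
    (h4 : ∀ r ∈ Ioo 0 (2 * ℓ₀) ∪ Ioi (2 * ℓ₀), iteratedDeriv 4 ψ r ≤ 0)
    (κ : ℝ) (hκ : 0 < κ) :
    (∀ r : ℝ, 0 ≤ r →
        ψ (r - min r κ) + ψ (r + min r κ) - 2 * ψ r ≤ 0) ∧
      ∀ r : ℝ, 0 ≤ r → r + min r κ ≤ 2 * ℓ₀ →
        ψ (r - min r κ) + ψ (r + min r κ) - 2 * ψ r ≤
          iteratedDeriv 2 ψ r * (min r κ) ^ 2 := by
  have hmin : ∀ r, 0 ≤ r → 0 ≤ min r κ ∧ min r κ ≤ r :=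
    fun r hr => ⟨le_min hr hκ.le, min_le_left _ _⟩
  refine ⟨fun r hr => ?_, fun r hr hrℓ => ?_⟩
  · obtain ⟨hδ0, hδr⟩ := hmin r hr
    linarith [hconc.add_le_two_mul (x := r) (h := min r κ) (mem_Ici.2 (by linarith))
      (mem_Ici.2 (by linarith))]
  · obtain ⟨hδ0, hδr⟩ := hmin r hr
    have hsub : Ioo (r - min r κ) (r + min r κ) ⊆ Ioo 0 (2 * ℓ₀) :=
      Ioo_subset_Ioo (by linarith) hrℓ
    have hψ : ContDiffOn ℝ 4 ψ (Ioo 0 (2 * ℓ₀)) := hC4.mono subset_union_left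
    refine add_sub_two_mul_le_of_concaveOn_deriv2 hδ0
      (hcont.mono fun x hx => mem_Ici.2 (by linarith [hx.1]))
      (f' := iteratedDeriv 1 ψ) (fun x hx => ?_)
      (fun x hx => hψ.hasDerivAt_iteratedDeriv isOpen_Ioo (by norm_num) (hsub hx))
      ((concaveOn_iteratedDeriv_two isOpen_Ioo (convex_Ioo _ _) hψ
        fun x hx => h4 x (Or.inl hx)).subset hsub (convex_Ioo _ _))
    simpa using hψ.hasDerivAt_iteratedDeriv (k := 0) isOpen_Ioo (by norm_num) (hsub hx)

/-- Second-order Taylor estimate for the concave distance function `ψ` used in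
refined basic coupling: if `ψ` is increasing and concave on `[0,∞)`, `C²` with
`ψ'' ≤ 0`, `ψ''' ≥ 0`, `ψ⁽⁴⁾ ≤ 0` on `(0,2ℓ₀) ∪ (2ℓ₀,∞)`, then for every `κ > 0`
and `r ≥ 0`, `ψ(r − r∧κ) + ψ(r + r∧κ) − 2ψ(r) ≤ 0`, with the sharpening
`ψ(r − r∧κ) + ψ(r + r∧κ) − 2ψ(r) ≤ ψ''(r)(r∧κ)²` when `r + r∧κ ≤ 2ℓ₀`. -/
theorem stmt_13 (ℓ₀ : ℝ) (hℓ₀ : 0 < ℓ₀) (ψ : ℝ → ℝ)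
    (hcont : ContinuousOn ψ (Ici 0))
    (hmono : MonotoneOn ψ (Ici 0))
    (hconc : ConcaveOn ℝ (Ici 0) ψ)
    (hC4 : ContDiffOn ℝ 4 ψ (Ioo 0 (2 * ℓ₀) ∪ Ioi (2 * ℓ₀)))
    (h2 : ∀ r ∈ Ioo 0 (2 * ℓ₀) ∪ Ioi (2 * ℓ₀), iteratedDeriv 2 ψ r ≤ 0)
    (h3 : ∀ r ∈ Ioo 0 (2 * ℓ₀) ∪ Ioi (2 * ℓ₀), 0 ≤ iteratedDeriv 3 ψ r)
    (h4 : ∀ r ∈ Ioo 0 (2 * ℓ₀) ∪ Ioi (2 * ℓ₀), iteratedDeriv 4 ψ r ≤ 0)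
    (κ : ℝ) (hκ : 0 < κ) :
    (∀ r : ℝ, 0 ≤ r →
        ψ (r - min r κ) + ψ (r + min r κ) - 2 * ψ r ≤ 0) ∧
      ∀ r : ℝ, 0 ≤ r → r + min r κ ≤ 2 * ℓ₀ →
        ψ (r - min r κ) + ψ (r + min r κ) - 2 * ψ r ≤
          iteratedDeriv 2 ψ r * (min r κ) ^ 2 :=
  stmt_13_general ℓ₀ ψ hcont hconc hC4 h4 κ hκ
end
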